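/- arXiv:2511.21776 — 3 statements merged into one kernel-verified Lean document; each statement's English description precedes it below -/
import Mathlib

section
/- For every integer k ≥ 1, tan(π / 2^{k+1}) = √(2 − c_{k−1}) / c_k. -/
open Real

noncomputable def c : ℕ → ℝ
  | 0 => 0
  | k + 1 => Real.sqrt (2 + c k)

theorem c_eq_sqrtTwoAddSeries : c = sqrtTwoAddSeries 0 := by
  funext k
  induction k with
  | zero => rfl
  | succ k ih => rw [c, ih, sqrtTwoAddSeries]

/-- For every integer `k ≥ 1`, `tan (π / 2 ^ (k + 1)) = √(2 - c (k - 1)) / c k`. -/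
theorem tan_pi_div_two_pow (k : ℕ) (hk : 1 ≤ k) :
    Real.tan (Real.pi / 2 ^ (k + 1)) = Real.sqrt (2 - c (k - 1)) / c k := by
  obtain ⟨n, rfl⟩ : ∃ n, k = n + 1 := Nat.exists_eq_add_of_le' hk
  rw [tan_eq_sin_div_cos, sin_pi_over_two_pow_succ, cos_pi_over_two_pow,
    c_eq_sqrtTwoAddSeries, Nat.add_sub_cancel]
  exact div_div_div_cancel_right₀ two_ne_zero _ _
end

section
/- For every integer k ≥ 1, π/4 = 2^{k−1} · arctan(√(2 − c_{k−1}) / c_k). -/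
open Real

lemma angle_mem (n : ℕ) : 0 ≤ π / 2 ^ (n + 1) ∧ π / 2 ^ (n + 1) ≤ π / 2 := by
  constructor
  · positivity
  · apply div_le_div_of_nonneg_left Real.pi_pos.le (by positivity)
    calc (2:ℝ) = 2 ^ 1 := by norm_num
    _ ≤ 2 ^ (n + 1) := by
      apply pow_le_pow_right₀ one_le_two (by omega)

lemma c_eq (k : ℕ) : c k = 2 * Real.cos (π / 2 ^ (k + 1)) := by
  induction k with
  | zero => simp [c]
  | succ n ih =>
    rw [show c (n+1) = Real.sqrt (2 + c n) from rfl, ih]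
    obtain ⟨h0, h1⟩ := angle_mem (n + 1)
    have hcos : 0 ≤ Real.cos (π / 2 ^ (n + 2)) :=
      Real.cos_nonneg_of_mem_Icc ⟨by linarith [Real.pi_pos], h1⟩
    have hdouble : 2 * (π / 2 ^ (n + 2)) = π / 2 ^ (n + 1) := by
      have : (2:ℝ) ^ (n + 2) = 2 * 2 ^ (n + 1) := by ring
      rw [this]; field_simp
    have hsq := Real.cos_sq (π / 2 ^ (n + 2))
    rw [hdouble] at hsq
    have key : 2 + 2 * Real.cos (π / 2 ^ (n + 1)) = (2 * Real.cos (π / 2 ^ (n + 2))) ^ 2 := by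
      nlinarith [hsq]
    rw [key, Real.sqrt_sq (by positivity)]

/-- For every integer `k ≥ 1`,
`π / 4 = 2 ^ (k - 1) * arctan (√(2 - c (k - 1)) / c k)`. -/
theorem pi_div_four_eq (k : ℕ) (hk : 1 ≤ k) :
    Real.pi / 4 = 2 ^ (k - 1) * Real.arctan (Real.sqrt (2 - c (k - 1)) / c k) := by
  obtain ⟨m, rfl⟩ : ∃ m, k = m + 1 := ⟨k - 1, by omega⟩
  simp only [Nat.add_sub_cancel]
  set θ := π / 2 ^ (m + 2) with hθ
  obtain ⟨h0, h1⟩ := angle_mem (m + 1)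
  have h1' : θ < π / 2 := by
    apply div_lt_div_of_pos_left Real.pi_pos (by norm_num)
    calc (2:ℝ) = 2 ^ 1 := by norm_num
    _ < 2 ^ (m + 2) := by
      apply pow_lt_pow_right₀ one_lt_two (by omega)
  have hcos : 0 < Real.cos θ := Real.cos_pos_of_mem_Ioo ⟨by linarith [Real.pi_pos], h1'⟩
  have hsin : 0 ≤ Real.sin θ := Real.sin_nonneg_of_nonneg_of_le_pi h0 (by linarith [Real.pi_pos])
  have hdouble : 2 * θ = π / 2 ^ (m + 1) := by
    rw [hθ, show (2:ℝ) ^ (m + 2) = 2 * 2 ^ (m + 1) by ring]; field_simp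
  have hck : c (m + 1) = 2 * Real.cos θ := c_eq (m + 1)
  have hcm : c m = 2 * Real.cos (2 * θ) := by rw [hdouble]; exact c_eq m
  have hsq := Real.sin_sq θ
  have key : 2 - c m = (2 * Real.sin θ) ^ 2 := by rw [hcm]; nlinarith [hsq, Real.cos_two_mul θ]
  rw [key, Real.sqrt_sq (by positivity), hck]
  have hratio : 2 * Real.sin θ / (2 * Real.cos θ) = Real.tan θ := by
    rw [Real.tan_eq_sin_div_cos]; field_simp
  rw [hratio, Real.arctan_tan (by linarith [Real.pi_pos]) h1']
  rw [hθ, show (2:ℝ) ^ (m + 2) = 2 ^ m * 4 by ring]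
  field_simp
end

section
/- The sequence whose k-th term is 2^{k−1} · Σ_{n ≥ k} √(2 − c_{n−1}) converges to π as k → ∞. -/
open Real Filter

lemma c_eq_s6 (n : ℕ) : c n = Real.sqrtTwoAddSeries 0 n := by
  induction n with
  | zero => simp [c]
  | succ m ih => simp [c, ih, Real.sqrtTwoAddSeries]

lemma sqrt_two_sub_c (n : ℕ) :
    Real.sqrt (2 - c n) = 2 * Real.sin (π / 2 ^ (n + 2)) := by
  rw [c_eq_s6, Real.sin_pi_over_two_pow_succ]
  ring

/-- equivalence between ℕ and `{n // k ≤ n}`. -/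
def natEquiv (k : ℕ) : ℕ ≃ {n : ℕ // k ≤ n} where
  toFun i := ⟨i + k, Nat.le_add_left _ _⟩
  invFun n := (n : ℕ) - k
  left_inv i := by simp
  right_inv n := by
    ext
    simpa using Nat.sub_add_cancel n.2

lemma tsum_eq_aux (m : ℕ) :
    (∑' n : {n : ℕ // m + 1 ≤ n}, Real.sqrt (2 - c ((n : ℕ) - 1)))
      = ∑' i : ℕ, 2 * Real.sin (π / 2 ^ (i + m + 2)) := by
  rw [← Equiv.tsum_eq (natEquiv (m + 1))]
  refine tsum_congr fun i => ?_
  show Real.sqrt (2 - c (i + (m + 1) - 1)) = _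
  have h : i + (m + 1) - 1 = i + m := by omega
  rw [h, sqrt_two_sub_c]

lemma bounds_aux (m : ℕ) :
    π - (π ^ 3 / 16) * (1/4 : ℝ) ^ (m + 1)
        ≤ (2:ℝ) ^ m * ∑' i : ℕ, 2 * Real.sin (π / 2 ^ (i + m + 2)) ∧
    (2:ℝ) ^ m * ∑' i : ℕ, 2 * Real.sin (π / 2 ^ (i + m + 2)) ≤ π := by
  have hπ : (0:ℝ) < π := Real.pi_pos
  set x0 : ℝ := π / 2 ^ (m + 2) with hx0
  have hx : ∀ i : ℕ, π / 2 ^ (i + m + 2) = x0 * (1/2 : ℝ) ^ i := by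
    intro i
    have h2 : (2:ℝ) ^ (i + m + 2) = 2 ^ (m + 2) * 2 ^ i := by
      rw [← pow_add]; congr 1; omega
    rw [hx0, h2, div_mul_eq_div_div, div_pow, one_pow, mul_one_div]
  have hx0pos : 0 < x0 := by positivity
  have hx0le : x0 ≤ 1 := by
    rw [hx0, div_le_one (by positivity)]
    calc π ≤ 4 := by linarith [Real.pi_le_four]
      _ = (2:ℝ) ^ 2 := by norm_num
      _ ≤ 2 ^ (m + 2) := by
          apply pow_le_pow_right₀ (by norm_num)
          omega
  have hxipos : ∀ i : ℕ, 0 < x0 * (1/2 : ℝ) ^ i := fun i => by positivity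
  have hxile : ∀ i : ℕ, x0 * (1/2 : ℝ) ^ i ≤ x0 := fun i => by
    nlinarith [pow_le_one₀ (by norm_num : (0:ℝ) ≤ 1/2) (by norm_num : (1/2:ℝ) ≤ 1) (n := i),
      (hxipos i).le]
  have hsum_geom : Summable (fun i : ℕ => x0 * (1/2 : ℝ) ^ i) :=
    (summable_geometric_of_lt_one (by norm_num) (by norm_num)).mul_left _
  have hsin_sum : Summable (fun i : ℕ => 2 * Real.sin (π / 2 ^ (i + m + 2))) := by
    apply Summable.of_nonneg_of_le (fun i => ?_) (fun i => ?_) (hsum_geom.mul_left 2)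
    · rw [hx i]
      have : 0 ≤ Real.sin (x0 * (1/2:ℝ)^i) :=
        Real.sin_nonneg_of_nonneg_of_le_pi (hxipos i).le
          (by nlinarith [(hxile i), Real.pi_gt_three])
      linarith
    · rw [hx i]
      have := Real.sin_lt (hxipos i)
      linarith
  have htsum_geom : ∑' i : ℕ, x0 * (1/2 : ℝ) ^ i = 2 * x0 := by
    rw [tsum_mul_left, tsum_geometric_of_lt_one (by norm_num) (by norm_num)]
    norm_num
    ring
  have hA : (2:ℝ) ^ m * x0 = π / 4 := by
    rw [hx0, pow_add]
    field_simp
    ring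
  constructor
  · -- lower bound
    have hge : ∑' i : ℕ, (2 - x0 ^ 2 / 2) * (x0 * (1/2 : ℝ) ^ i)
        ≤ ∑' i : ℕ, 2 * Real.sin (π / 2 ^ (i + m + 2)) := by
      apply Summable.tsum_le_tsum (fun i => ?_) (hsum_geom.mul_left _) hsin_sum
      rw [hx i]
      set y := x0 * (1/2 : ℝ) ^ i with hy
      have h1 : y - y ^ 3 / 4 < Real.sin y :=
        by have := Real.sin_gt_sub_cube (hxipos i); nlinarith [pow_pos (hxipos i) 3]
      have h2 : y ^ 2 ≤ x0 ^ 2 := by nlinarith [hxile i, (hxipos i).le]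
      have h3 : y ^ 3 ≤ x0 ^ 2 * y := by nlinarith [mul_le_mul_of_nonneg_right h2 (hxipos i).le]
      nlinarith [h1, h3]
    rw [tsum_mul_left, htsum_geom] at hge
    have h2m : (2:ℝ) ^ m * ((2 - x0 ^ 2 / 2) * (2 * x0)) = π - π * x0 ^ 2 / 4 := by
      linear_combination (4 - x0 ^ 2) * hA
    have hx0sq : π * x0 ^ 2 / 4 = (π ^ 3 / 16) * (1/4 : ℝ) ^ (m + 1) := by
      have hpow2 : ((2:ℝ) ^ (m + 2)) ^ 2 = 4 ^ (m + 2) := by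
        rw [← pow_mul, mul_comm, pow_mul]; norm_num
      rw [hx0, div_pow, hpow2, pow_succ, pow_succ, one_div, inv_pow]
      have h4 : ((4:ℝ) ^ m) ≠ 0 := by positivity
      field_simp
      ring
    calc π - (π ^ 3 / 16) * (1/4 : ℝ) ^ (m + 1)
        = π - π * x0 ^ 2 / 4 := by rw [hx0sq]
      _ = (2:ℝ) ^ m * ((2 - x0 ^ 2 / 2) * (2 * x0)) := h2m.symm
      _ ≤ (2:ℝ) ^ m * ∑' i : ℕ, 2 * Real.sin (π / 2 ^ (i + m + 2)) :=
          mul_le_mul_of_nonneg_left hge (by positivity)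
  · -- upper bound
    have hle : ∑' i : ℕ, 2 * Real.sin (π / 2 ^ (i + m + 2)) ≤ 2 * (2 * x0) := by
      calc ∑' i : ℕ, 2 * Real.sin (π / 2 ^ (i + m + 2))
          ≤ ∑' i : ℕ, 2 * (x0 * (1/2 : ℝ) ^ i) := by
            apply Summable.tsum_le_tsum (fun i => ?_) hsin_sum (hsum_geom.mul_left 2)
            rw [hx i]
            have := Real.sin_lt (hxipos i)
            linarith
        _ = 2 * ∑' i : ℕ, x0 * (1/2 : ℝ) ^ i := tsum_mul_left
        _ = 2 * (2 * x0) := by rw [htsum_geom]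
    calc (2:ℝ) ^ m * ∑' i : ℕ, 2 * Real.sin (π / 2 ^ (i + m + 2))
        ≤ (2:ℝ) ^ m * (2 * (2 * x0)) := mul_le_mul_of_nonneg_left hle (by positivity)
      _ = π := by linear_combination 4 * hA

/-- The sequence whose `k`-th term is `2 ^ (k - 1) * Σ_{n ≥ k} √(2 - c (n - 1))`
converges to `π` as `k → ∞`. -/
theorem tendsto_two_pow_pred_mul_tsum_pi :
    Filter.Tendsto
      (fun k : ℕ => (2 : ℝ) ^ (k - 1) *
        ∑' n : {n : ℕ // k ≤ n}, Real.sqrt (2 - c ((n : ℕ) - 1)))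
      Filter.atTop (nhds Real.pi) := by
  have hlow : Tendsto (fun k : ℕ => π - (π ^ 3 / 16) * (1/4 : ℝ) ^ k) atTop (nhds π) := by
    have h4 : Tendsto (fun k : ℕ => (1/4 : ℝ) ^ k) atTop (nhds 0) := by
      apply tendsto_pow_atTop_nhds_zero_of_lt_one <;> norm_num
    have := ((h4.const_mul (π ^ 3 / 16)).const_sub π)
    simpa using this
  refine tendsto_of_tendsto_of_tendsto_of_le_of_le' hlow tendsto_const_nhds ?_ ?_ <;>
    · rw [eventually_atTop]
      refine ⟨1, fun k hk => ?_⟩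
      obtain ⟨m, rfl⟩ := Nat.exists_eq_add_of_le hk
      rw [add_comm 1 m, tsum_eq_aux m]
      have hb := bounds_aux m
      have hpow : ((2:ℝ) ^ (m + 1 - 1)) = 2 ^ m := by norm_num
      rw [hpow]
      first
        | exact hb.1
        | exact hb.2
end
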